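/- For every z ∈ ℂ^n − Δ and all distinct indices i_2,...,i_k ∈ {1,...,n}, the relation ∑_{j=1}^n w_{j,i_2,...,i_k} = 0 holds in A_z (the terms with j ∈ {i_2,...,i_k} vanish since then d_{j,i_2,...,i_k} = 0). -/

import Mathlib

open MvPolynomial

noncomputable section

/-- The determinant `d_{l 1, …, l k}` of the `k × k` matrix whose `m`-th column consists of
`b (l m) 1, …, b (l m) k`. -/
def dd {n k : ℕ} (b : Fin n → Fin k → ℂ) (l : Fin k → Fin n) : ℂ :=
  Matrix.det (Matrix.of fun j m => b (l m) j)

/-- `f_i(t,z) = ∑_j b_i^j t_j + z_i` as a polynomial in `t = (t_1,…,t_k)`. -/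
def fpoly {n k : ℕ} (b : Fin n → Fin k → ℂ) (z : Fin n → ℂ) (i : Fin n) :
    MvPolynomial (Fin k) ℂ :=
  (∑ j, C (b i j) * X j) + C (z i)

/-- `f_{i_1,…,i_{k+1}}(z) = ∑_{l=1}^{k+1} (-1)^{l-1} d_{i_1,…,î_l,…,i_{k+1}} z_{i_l}`. -/
def fF {n k : ℕ} (b : Fin n → Fin k → ℂ) (z : Fin n → ℂ) (I : Fin (k + 1) → Fin n) : ℂ :=
  ∑ l : Fin (k + 1), (-1) ^ (l : ℕ) * dd b (I ∘ l.succAbove) * z (I l)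

/-- The discriminant `Δ ⊂ ℂⁿ`, the union over `1 ≤ i_1 < … < i_{k+1} ≤ n` of the zero sets of
the `f_{i_1,…,i_{k+1}}`. -/
def discr {n k : ℕ} (b : Fin n → Fin k → ℂ) : Set (Fin n → ℂ) :=
  {z | ∃ I : Fin (k + 1) → Fin n, StrictMono I ∧ fF b z I = 0}

/-- The multiplicative set generated by `f_1(t,z), …, f_n(t,z)`. -/
def Sz {n k : ℕ} (b : Fin n → Fin k → ℂ) (z : Fin n → ℂ) :
    Submonoid (MvPolynomial (Fin k) ℂ) :=
  Submonoid.closure (Set.range (fpoly b z))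

/-- `R_z`, the localization of `ℂ[t_1,…,t_k]` at the multiplicative set generated by the
`f_i(t,z)`. -/
abbrev Rz {n k : ℕ} (b : Fin n → Fin k → ℂ) (z : Fin n → ℂ) :=
  Localization (Sz b z)

lemma fpoly_mem {n k : ℕ} (b : Fin n → Fin k → ℂ) (z : Fin n → ℂ) (i : Fin n) :
    fpoly b z i ∈ Sz b z :=
  Submonoid.subset_closure ⟨i, rfl⟩

/-- `∂Φ/∂t_m = ∑_i a_i b_i^m / f_i(t,z)` as an element of `R_z`. -/
def dPhi {n k : ℕ} (a : Fin n → ℂ) (b : Fin n → Fin k → ℂ) (z : Fin n → ℂ)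
    (m : Fin k) : Rz b z :=
  ∑ i, Localization.mk (C (a i * b i m)) ⟨fpoly b z i, fpoly_mem b z i⟩

/-- The ideal `I_z ⊆ R_z` generated by the `∂Φ/∂t_m`, `m = 1,…,k`. -/
def Iz {n k : ℕ} (a : Fin n → ℂ) (b : Fin n → Fin k → ℂ) (z : Fin n → ℂ) :
    Ideal (Rz b z) :=
  Ideal.span (Set.range (dPhi a b z))

/-- The algebra `A_z = R_z / I_z`. -/
abbrev Az {n k : ℕ} (a : Fin n → ℂ) (b : Fin n → Fin k → ℂ) (z : Fin n → ℂ) :=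
  Rz b z ⧸ Iz a b z

/-- `p_j(z) = [a_j / f_j(t,z)] ∈ A_z`. -/
def pz {n k : ℕ} (a : Fin n → ℂ) (b : Fin n → Fin k → ℂ) (z : Fin n → ℂ)
    (j : Fin n) : Az a b z :=
  Ideal.Quotient.mk _ (Localization.mk (C (a j)) ⟨fpoly b z j, fpoly_mem b z j⟩)

/-- The canonical map `ℂ → A_z` (scalars). -/
def cA {n k : ℕ} (a : Fin n → ℂ) (b : Fin n → Fin k → ℂ) (z : Fin n → ℂ)
    (c : ℂ) : Az a b z :=
  (algebraMap ℂ (Az a b z) : ℂ →+* Az a b z) c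

/-- `w_{i_1,…,i_k} = d_{i_1,…,i_k} p_{i_1}(z) ⋯ p_{i_k}(z) ∈ A_z`. -/
def wz {n k : ℕ} (a : Fin n → ℂ) (b : Fin n → Fin k → ℂ) (z : Fin n → ℂ)
    (l : Fin k → Fin n) : Az a b z :=
  cA a b z (dd b l) * ∏ m, pz a b z (l m)

/-- The image of a polynomial in the field of rational functions `ℂ(t_1,…,t_k)`. -/
def toF {k : ℕ} (q : MvPolynomial (Fin k) ℂ) : FractionRing (MvPolynomial (Fin k) ℂ) :=
  algebraMap _ _ q

/-! Expanding `d_{j,i_2,…,i_k}` along its first column gives `∑_m c_m b_j^m` with cofactors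
`c_m` independent of `j`. Hence `∑_j d_{j,i_2,…,i_k} p_j = ∑_m c_m ∑_j b_j^m p_j`, and each inner
sum is the class of the generator `∂Φ/∂t_m` of `I_z`, so it vanishes in `A_z`. -/

lemma sum_algebraMap_linearCombination_mul_eq_zero {K A ι κ : Type*} [CommSemiring K]
    [Semiring A] [Algebra K A] [Fintype ι] [Fintype κ] (b : ι → κ → K) (p : ι → A)
    (h : ∀ m, ∑ j, algebraMap K A (b j m) * p j = 0) (c : κ → K) :
    ∑ j, algebraMap K A (∑ m, c m * b j m) * p j = 0 := by
  calc ∑ j, algebraMap K A (∑ m, c m * b j m) * p j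
      = ∑ m, algebraMap K A (c m) * ∑ j, algebraMap K A (b j m) * p j := by
        simp only [map_sum, map_mul, Finset.sum_mul, Finset.mul_sum, mul_assoc]
        exact Finset.sum_comm
    _ = 0 := by simp only [h, mul_zero, Finset.sum_const_zero]

lemma dd_cons_eq_sum {n k : ℕ} (b : Fin n → Fin (k + 1) → ℂ) (I : Fin k → Fin n) (j : Fin n) :
    dd b (Fin.cons j I) =
      ∑ r : Fin (k + 1),
        (-1 : ℂ) ^ (r : ℕ) * Matrix.det (Matrix.of fun r' m => b (I m) (r.succAbove r')) *
          b j r := by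
  rw [dd, Matrix.det_succ_column_zero]
  refine Finset.sum_congr rfl fun r _ => ?_
  simp only [Matrix.of_apply, Fin.cons_zero, Matrix.submatrix, Fin.cons_succ]
  ring

section RelationsInAz

variable {n k : ℕ} (a : Fin n → ℂ) (b : Fin n → Fin k → ℂ) (z : Fin n → ℂ)

lemma cA_mul_pz (c : ℂ) (j : Fin n) :
    cA a b z c * pz a b z j =
      Ideal.Quotient.mk (Iz a b z)
        (Localization.mk (C (a j * c)) ⟨fpoly b z j, fpoly_mem b z j⟩) := by
  rw [cA, pz, IsScalarTower.algebraMap_apply ℂ (Rz b z) (Az a b z),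
    Ideal.Quotient.algebraMap_eq, ← map_mul,
    IsScalarTower.algebraMap_apply ℂ (MvPolynomial (Fin k) ℂ) (Rz b z),
    ← Localization.mk_one_eq_algebraMap, Localization.mk_mul, one_mul,
    MvPolynomial.algebraMap_eq, ← C_mul, mul_comm]

lemma mk_dPhi (m : Fin k) :
    Ideal.Quotient.mk (Iz a b z) (dPhi a b z m) = ∑ j, cA a b z (b j m) * pz a b z j := by
  simp only [dPhi, map_sum, cA_mul_pz]

lemma sum_cA_mul_pz_eq_zero (m : Fin k) : ∑ j, cA a b z (b j m) * pz a b z j = 0 := by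
  rw [← mk_dPhi, Ideal.Quotient.eq_zero_iff_mem]
  exact Ideal.subset_span ⟨m, rfl⟩

end RelationsInAz

lemma wz_cons {n k : ℕ} (a : Fin n → ℂ) (b : Fin n → Fin (k + 1) → ℂ) (z : Fin n → ℂ)
    (I : Fin k → Fin n) (j : Fin n) :
    wz a b z (Fin.cons j I) =
      cA a b z (dd b (Fin.cons j I)) * pz a b z j * ∏ m, pz a b z (I m) := by
  rw [wz, Fin.prod_univ_succ, mul_assoc]
  simp only [Fin.cons_zero, Fin.cons_succ]

theorem stmt8_general (n k' : ℕ) (b : Fin n → Fin (k' + 1) → ℂ)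
    (a : Fin n → ℂ)
    (z : Fin n → ℂ)
    (I : Fin k' → Fin n) :
    ∑ j : Fin n, wz a b z (Fin.cons j I) = 0 := by
  have relation : ∑ j, cA a b z (dd b (Fin.cons j I)) * pz a b z j = 0 := by
    simp only [dd_cons_eq_sum]
    exact sum_algebraMap_linearCombination_mul_eq_zero b (pz a b z)
      (sum_cA_mul_pz_eq_zero a b z) _
  calc ∑ j : Fin n, wz a b z (Fin.cons j I)
      = (∑ j, cA a b z (dd b (Fin.cons j I)) * pz a b z j) * ∏ m, pz a b z (I m) := by
        rw [Finset.sum_mul (R := Az a b z)]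
        exact Finset.sum_congr rfl fun j _ => wz_cons a b z I j
    _ = 0 := by
        rw [relation]
        exact zero_mul (M₀ := Az a b z) _

/-- Fix `n > k ≥ 1` (here `k = k' + 1`), numbers `b_i^j` with all determinants
`d_{i_1,…,i_k}` (distinct indices) nonzero, weights `a_i ∈ ℂ^×` with `|a| = ∑ a_i ≠ 0`, and
`z ∈ ℂⁿ − Δ`.  Then for all distinct indices `i_2,…,i_k` (the tuple `I`), the relation
`∑_{j=1}^n w_{j,i_2,…,i_k} = 0` holds in `A_z`. -/
theorem stmt8 (n k' : ℕ) (hnk : k' + 1 < n) (b : Fin n → Fin (k' + 1) → ℂ)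
    (hd : ∀ l : Fin (k' + 1) → Fin n, Function.Injective l → dd b l ≠ 0)
    (a : Fin n → ℂ) (ha : ∀ i, a i ≠ 0) (hsum : ∑ i, a i ≠ 0)
    (z : Fin n → ℂ) (hz : z ∉ discr b)
    (I : Fin k' → Fin n) (hI : Function.Injective I) :
    ∑ j : Fin n, wz a b z (Fin.cons j I) = 0 :=
  stmt8_general n k' b a z I
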